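/- arXiv:1607.08179 — 18 statements merged into one kernel-verified Lean document; each statement's English description precedes it below -/
import Mathlib

section
/- Let R be a ring with identity and a, b, c ∈ R. Then a is (b,c)-invertible with (b,c)-inverse y if and only if yay = y, yR = bR, and Ry = Rc. -/
variable {R : Type*} [Ring R]

/-- `y` is the (b,c)-inverse of `a`: `y ∈ bRy ∩ yRc`, `yab = b`, `cay = c`. -/
def IsBCInv (b c a y : R) : Prop :=
  (∃ r : R, y = b * r * y) ∧ (∃ r : R, y = y * r * c) ∧ y * a * b = b ∧ c * a * y = c

/-- right ideal `xR` -/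
def rIdeal (x : R) : Set R := {z : R | ∃ r : R, z = x * r}

/-- left ideal `Rx` -/
def lIdeal (x : R) : Set R := {z : R | ∃ r : R, z = r * x}

/-- group inverse -/
def IsGroupInv (a y : R) : Prop := a * y * a = a ∧ y * a * y = y ∧ a * y = y * a

/-- `y` is the inverse of `a` along `d`. -/
def IsInvAlong (d a y : R) : Prop :=
  y * a * d = d ∧ d * a * y = d ∧ rIdeal y ⊆ rIdeal d ∧ lIdeal y ⊆ lIdeal d

/-- `(p,q)`-outer inverse -/
def IsOuterInv (p q a y : R) : Prop := y * a * y = y ∧ y * a = p ∧ a * y = 1 - q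

theorem stmt0 (a b c y : R) :
    IsBCInv b c a y ↔ (y * a * y = y ∧ rIdeal y = rIdeal b ∧ lIdeal y = lIdeal c) := by
  constructor
  · rintro ⟨⟨r, hr⟩, ⟨s, hs⟩, hb, hc⟩
    refine ⟨?_, ?_, ?_⟩
    · calc y * a * y = y * a * (b * r * y) := by rw [← hr]
        _ = (y * a * b) * r * y := by noncomm_ring
        _ = y := by rw [hb, ← hr]
    · ext z
      constructor
      · rintro ⟨t, rfl⟩
        exact ⟨r * y * t, by nth_rewrite 1 [hr]; noncomm_ring⟩
      · rintro ⟨t, rfl⟩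
        exact ⟨a * b * t, by nth_rewrite 1 [← hb]; noncomm_ring⟩
    · ext z
      constructor
      · rintro ⟨t, rfl⟩
        exact ⟨t * y * s, by nth_rewrite 1 [hs]; noncomm_ring⟩
      · rintro ⟨t, rfl⟩
        exact ⟨t * c * a, by nth_rewrite 1 [← hc]; noncomm_ring⟩
  · rintro ⟨hyy, hr, hl⟩
    obtain ⟨r, hr1⟩ : y ∈ rIdeal b := hr ▸ ⟨1, (mul_one _).symm⟩
    obtain ⟨s, hs1⟩ : y ∈ lIdeal c := hl ▸ ⟨1, (one_mul _).symm⟩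
    obtain ⟨u, hu⟩ : b ∈ rIdeal y := hr.symm ▸ ⟨1, (mul_one _).symm⟩
    obtain ⟨v, hv⟩ : c ∈ lIdeal y := hl.symm ▸ ⟨1, (one_mul _).symm⟩
    refine ⟨⟨r * a, ?_⟩, ⟨a * s, ?_⟩, ?_, ?_⟩
    · calc y = y * a * y := hyy.symm
        _ = (b * r) * a * y := by rw [← hr1]
        _ = b * (r * a) * y := by noncomm_ring
    · calc y = y * a * y := hyy.symm
        _ = y * a * (s * c) := by rw [← hs1]
        _ = y * (a * s) * c := by noncomm_ring
    · calc y * a * b = y * a * (y * u) := by rw [← hu]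
        _ = (y * a * y) * u := by noncomm_ring
        _ = b := by rw [hyy, ← hu]
    · calc c * a * y = (v * y) * a * y := by rw [← hv]
        _ = v * (y * a * y) := by noncomm_ring
        _ = c := by rw [hyy, ← hv]
end

section
/- Let R be a ring with identity and a, b, c ∈ R. Then a is (b,c)-invertible with (b,c)-inverse y if and only if b and c are von Neumann regular (with inner inverses b⁻, c⁻) and there exists y ∈ R such that y = b b⁻ y = y c⁻ c, b = yab, and c = cay. -/
variable {R : Type*} [Ring R]

theorem stmt1 (a b c y : R) :
    IsBCInv b c a y ↔
      ∃ bi ci : R, b * bi * b = b ∧ c * ci * c = c ∧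
        y = b * bi * y ∧ y = y * ci * c ∧ b = y * a * b ∧ c = c * a * y := by
  constructor
  · rintro ⟨⟨r, hr⟩, ⟨s, hs⟩, hb, hc⟩
    have hyay : y * a * y = y := by
      have : y = y * a * y := by
        calc y = y * s * c := hs
          _ = y * s * (c * a * y) := by rw [hc]
          _ = (y * s * c) * a * y := by noncomm_ring
          _ = y * a * y := by rw [← hs]
      exact this.symm
    refine ⟨r * y * a, a * y * s, ?_, ?_, ?_, ?_, hb.symm, hc.symm⟩
    · calc b * (r * y * a) * b = b * r * y * a * b := by noncomm_ring
        _ = y * a * b := by rw [← hr]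
        _ = b := hb
    · calc c * (a * y * s) * c = c * a * (y * s * c) := by noncomm_ring
        _ = c * a * y := by rw [← hs]
        _ = c := hc
    · calc y = y * a * y := hyay.symm
        _ = (b * r * y) * a * y := by rw [← hr]
        _ = b * (r * y * a) * y := by noncomm_ring
    · calc y = y * a * y := hyay.symm
        _ = y * a * (y * s * c) := by rw [← hs]
        _ = y * (a * y * s) * c := by noncomm_ring
  · rintro ⟨bi, ci, _, _, h1, h2, h3, h4⟩
    exact ⟨⟨bi, h1⟩, ⟨ci, h2⟩, h3.symm, h4.symm⟩
end

section
/- Let R be a ring and a, b, c ∈ R such that the (b,c)-inverse a^{(b,c)} exists. If ab = ba and ca = ac, then a^{(b,c)} commutes with a. -/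
variable {R : Type*} [Ring R]

theorem stmt3 (a b c y : R) (hy : IsBCInv b c a y)
    (hab : a * b = b * a) (hca : c * a = a * c) : y * a = a * y := by
  obtain ⟨⟨r, hr⟩, ⟨s, hs⟩, hb, hc⟩ := hy
  have hay : a * y = y * a * (a * y) := by
    calc a * y = a * (b * r * y) := by rw [← hr]
      _ = (a * b) * r * y := by noncomm_ring
      _ = (b * a) * r * y := by rw [hab]
      _ = ((y * a * b) * a) * r * y := by rw [hb]
      _ = y * a * ((b * a) * (r * y)) := by noncomm_ring
      _ = y * a * ((a * b) * (r * y)) := by rw [← hab]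
      _ = y * a * (a * (b * r * y)) := by noncomm_ring
      _ = y * a * (a * y) := by rw [← hr]
  have hya : y * a = y * a * (a * y) := by
    calc y * a = (y * s * c) * a := by rw [← hs]
      _ = y * s * (c * a) := by noncomm_ring
      _ = y * s * (a * c) := by rw [hca]
      _ = y * s * (a * (c * a * y)) := by rw [hc]
      _ = y * s * ((a * c) * (a * y)) := by noncomm_ring
      _ = y * s * ((c * a) * (a * y)) := by rw [hca]
      _ = (y * s * c) * (a * (a * y)) := by noncomm_ring
      _ = y * (a * (a * y)) := by rw [← hs]
      _ = y * a * (a * y) := by noncomm_ring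
  rw [hya, ← hay]
end

section
/- Let R be a ring and a, b, c ∈ R such that a^{(b,c)} exists. If ab = ba and cb = bc, then a^{(b,c)} commutes with b. -/
variable {R : Type*} [Ring R]

theorem stmt4 (a b c y : R) (hy : IsBCInv b c a y)
    (hab : a * b = b * a) (hcb : c * b = b * c) : y * b = b * y := by
  obtain ⟨⟨r, hr⟩, ⟨s, hs⟩, h1, h2⟩ := hy
  have e1 : y * b * a * y = b * y := by
    rw [mul_assoc y b a, ← hab, ← mul_assoc, h1]
  have e2 : y * b = y * s * b * c := by
    conv_lhs => rw [hs]
    rw [mul_assoc, hcb, ← mul_assoc]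
  have e3 : y * s * b * c * a * y = y * s * b * c := by
    rw [mul_assoc (y * s * b) c a, mul_assoc (y * s * b) (c * a) y, h2]
  calc y * b = y * s * b * c := e2
    _ = y * s * b * c * a * y := e3.symm
    _ = y * b * a * y := by rw [← e2]
    _ = b * y := e1
end

section
/- Let R be a ring and a, w, b, c, s, t ∈ R such that a^{(t,c)} and w^{(b,s)} exist. Then aw is (b,c)-invertible with (aw)^{(b,c)} = w^{(b,s)} a^{(t,c)} if and only if b = w^{(b,s)} a^{(t,c)} a w b and c = c a w w^{(b,s)} a^{(t,c)}. -/
variable {R : Type*} [Ring R]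

theorem stmt5 (a w b c s t ya yw : R)
    (ha : IsBCInv t c a ya) (hw : IsBCInv b s w yw) :
    IsBCInv b c (a * w) (yw * ya) ↔
      (b = yw * ya * a * w * b ∧ c = c * a * w * yw * ya) := by
  obtain ⟨⟨r1, hr1⟩, ⟨r2, hr2⟩, _, _⟩ := ha
  obtain ⟨⟨r3, hr3⟩, ⟨r4, hr4⟩, _, _⟩ := hw
  constructor
  · rintro ⟨_, _, h3, h4⟩
    exact ⟨by simpa only [mul_assoc] using h3.symm,
           by simpa only [mul_assoc] using h4.symm⟩
  · rintro ⟨h1, h2⟩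
    refine ⟨⟨r3, by rw [← mul_assoc, ← hr3]⟩, ⟨r2, ?_⟩,
            by simpa only [mul_assoc] using h1.symm,
            by simpa only [mul_assoc] using h2.symm⟩
    nth_rewrite 1 [hr2]
    simp only [mul_assoc]
end

section
/- Let R be a ring and a, w, b, c, s, t ∈ R such that a^{(t,c)} and w^{(b,s)} exist. If Ra ⊆ Rs and wR ⊆ tR, then aw is (b,c)-invertible and (aw)^{(b,c)} = w^{(b,s)} a^{(t,c)}. -/
variable {R : Type*} [Ring R]

theorem stmt6 (a w b c s t ya yw : R)
    (ha : IsBCInv t c a ya) (hw : IsBCInv b s w yw)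
    (h1 : lIdeal a ⊆ lIdeal s) (h2 : rIdeal w ⊆ rIdeal t) :
    IsBCInv b c (a * w) (yw * ya) := by
  obtain ⟨⟨r1, hr1⟩, ⟨r2, hr2⟩, hat, hca⟩ := ha
  obtain ⟨⟨r3, hr3⟩, ⟨r4, hr4⟩, hwb, hsw⟩ := hw
  obtain ⟨r5, hr5⟩ := h1 ⟨1, (one_mul a).symm⟩
  obtain ⟨r6, hr6⟩ := h2 ⟨1, (mul_one w).symm⟩
  have haw : ya * (a * w) = w := by
    rw [hr6, ← mul_assoc, ← mul_assoc, hat]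
  have hwy : (a * w) * yw = a := by
    calc (a * w) * yw = r5 * (s * w * yw) := by rw [hr5]; noncomm_ring
    _ = a := by rw [hsw, hr5]
  refine ⟨⟨r3, ?_⟩, ⟨r2, ?_⟩, ?_, ?_⟩
  · conv_lhs => rw [hr3]
    noncomm_ring
  · conv_lhs => rw [hr2]
    noncomm_ring
  · calc yw * ya * (a * w) * b = yw * (ya * (a * w)) * b := by noncomm_ring
    _ = yw * w * b := by rw [haw]
    _ = b := hwb
  · calc c * (a * w) * (yw * ya) = c * ((a * w) * yw) * ya := by noncomm_ring
    _ = c * a * ya := by rw [hwy]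
    _ = c := hca
end

section
/- Let R be a ring and a, w, b, c ∈ R such that a^{(b,c)} and w^{(b,c)} exist. If wb = bw and ac = ca, then aw is (b,c)-invertible and (aw)^{(b,c)} = w^{(b,c)} a^{(b,c)}. -/
variable {R : Type*} [Ring R]

theorem stmt7 (a w b c ya yw : R)
    (ha : IsBCInv b c a ya) (hw : IsBCInv b c w yw)
    (h1 : w * b = b * w) (h2 : a * c = c * a) :
    IsBCInv b c (a * w) (yw * ya) := by
  obtain ⟨⟨r1, hr1⟩, ⟨s1, hs1⟩, hab, hca⟩ := ha
  obtain ⟨⟨r2, hr2⟩, ⟨s2, hs2⟩, hwb, hcw⟩ := hw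
  refine ⟨⟨r2, ?_⟩, ⟨s1, ?_⟩, ?_, ?_⟩
  · calc yw * ya = (b * r2 * yw) * ya := by rw [← hr2]
      _ = b * r2 * (yw * ya) := by noncomm_ring
  · calc yw * ya = yw * (ya * s1 * c) := by rw [← hs1]
      _ = yw * ya * s1 * c := by noncomm_ring
  · calc yw * ya * (a * w) * b = yw * (ya * a * b) * w := by
          rw [mul_assoc _ (a*w) b, mul_assoc a w b, h1]; noncomm_ring
      _ = yw * (b * w) := by rw [hab]; noncomm_ring
      _ = yw * w * b := by rw [← h1]; noncomm_ring
      _ = b := hwb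
  · calc c * (a * w) * (yw * ya) = a * (c * w * yw) * ya := by
          rw [show c * (a * w) = a * c * w from by rw [← mul_assoc, ← h2]]; noncomm_ring
      _ = a * c * ya := by rw [hcw]
      _ = c * a * ya := by rw [h2]
      _ = c := hca
end

section
/- Let R be a ring and a, w, b, c ∈ R such that a^{(b,c)} and w^{(b,c)} exist. If ab = ba and ac = ca, then both aw and wa are (b,c)-invertible with (aw)^{(b,c)} = w^{(b,c)} a^{(b,c)} and (wa)^{(b,c)} = a^{(b,c)} w^{(b,c)}. -/
variable {R : Type*} [Ring R]

theorem stmt8 (a w b c ya yw : R)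
    (ha : IsBCInv b c a ya) (hw : IsBCInv b c w yw)
    (h1 : a * b = b * a) (h2 : a * c = c * a) :
    IsBCInv b c (a * w) (yw * ya) ∧ IsBCInv b c (w * a) (ya * yw) := by
  obtain ⟨⟨r, hr⟩, ⟨v, hv⟩, hab, hca⟩ := ha
  obtain ⟨⟨s, hs⟩, ⟨t, ht⟩, hwb, hcw⟩ := hw
  -- right-associated "generalized" versions of the hypotheses
  have hr' : ∀ x : R, ya * x = b * (r * (ya * x)) := by
    intro x; simp only [← mul_assoc]; rw [← hr]
  have hv' : ∀ x : R, ya * x = ya * (v * (c * x)) := by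
    intro x
    conv_lhs => rw [hv]
    simp only [mul_assoc]
  have hs' : ∀ x : R, yw * x = b * (s * (yw * x)) := by
    intro x; simp only [← mul_assoc]; rw [← hs]
  have ht' : ∀ x : R, yw * x = yw * (t * (c * x)) := by
    intro x
    conv_lhs => rw [ht]
    simp only [mul_assoc]
  have hab' : ∀ x : R, ya * (a * (b * x)) = b * x := by
    intro x; simp only [← mul_assoc, hab]
  have hca' : ∀ x : R, c * (a * (ya * x)) = c * x := by
    intro x; simp only [← mul_assoc, hca]
  have hwb' : ∀ x : R, yw * (w * (b * x)) = b * x := by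
    intro x; simp only [← mul_assoc, hwb]
  have hcw' : ∀ x : R, c * (w * (yw * x)) = c * x := by
    intro x; simp only [← mul_assoc, hcw]
  have h1' : ∀ x : R, a * (b * x) = b * (a * x) := by
    intro x; simp only [← mul_assoc, h1]
  have h2' : ∀ x : R, a * (c * x) = c * (a * x) := by
    intro x; simp only [← mul_assoc, h2]
  -- the two key lemmas
  have L1 : ∀ x : R, c * (ya * (a * (w * (b * x)))) = c * (w * (b * x)) := by
    intro x
    conv_lhs =>
      rw [hv' (a * (w * (b * x)))]
      rw [← h2' (w * (b * x))]
      rw [← hca' (w * (b * x))]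
      rw [hr' (w * (b * x))]
      rw [h1' (r * (ya * (w * (b * x))))]
      rw [h2' (b * (a * (r * (ya * (w * (b * x))))))]
      rw [← hv' (a * (b * (a * (r * (ya * (w * (b * x)))))))]
      rw [hab' (a * (r * (ya * (w * (b * x)))))]
      rw [← h1' (r * (ya * (w * (b * x))))]
      rw [← hr' (w * (b * x))]
      rw [hca' (w * (b * x))]
  have L2 : ∀ x : R, c * (w * (a * (ya * (b * x)))) = c * (w * (b * x)) := by
    intro x
    conv_lhs =>
      rw [hr' (b * x)]
      rw [h1' (r * (ya * (b * x)))]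
      rw [← hab' (a * (r * (ya * (b * x))))]
      rw [hv' (a * (b * (a * (r * (ya * (b * x))))))]
      rw [← h1' (r * (ya * (b * x)))]
      rw [← hr' (b * x)]
      rw [← h2' (a * (ya * (b * x)))]
      rw [hca' (b * x)]
      rw [h2' (b * x)]
      rw [← hv' (a * (b * x))]
      rw [hab' x]
  have L1b : c * (ya * (a * (w * b))) = c * (w * b) := by
    have := L1 1
    rwa [mul_one] at this
  refine ⟨⟨⟨s, by rw [← mul_assoc, ← hs]⟩,
           ⟨v, by rw [mul_assoc, mul_assoc, ← mul_assoc ya v c, ← hv]⟩, ?_, ?_⟩,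
          ⟨⟨r, by rw [← mul_assoc, ← hr]⟩,
           ⟨t, by rw [mul_assoc, mul_assoc, ← mul_assoc yw t c, ← ht]⟩, ?_, ?_⟩⟩
  · -- yw * ya * (a * w) * b = b
    simp only [mul_assoc]
    conv_lhs =>
      rw [ht' (ya * (a * (w * b)))]
      rw [L1b]
      rw [← ht' (w * b)]
    rw [← mul_assoc, hwb]
  · -- c * (a * w) * (yw * ya) = c
    simp only [mul_assoc]
    rw [← h2' (w * (yw * ya)), hcw' ya, h2' ya, ← mul_assoc, hca]
  · -- ya * yw * (w * a) * b = b
    simp only [mul_assoc]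
    rw [h1, hwb' a, ← mul_assoc, mul_assoc ya b a, ← h1, ← mul_assoc, hab]
  · -- c * (w * a) * (ya * yw) = c
    simp only [mul_assoc]
    rw [hs]
    simp only [mul_assoc]
    rw [L2 (s * yw)]
    rw [show b * (s * yw) = yw from by rw [← mul_assoc, ← hs]]
    rw [← mul_assoc, hcw]
end

section
/- Let R be a ring and a, w, d ∈ R such that a and w are both invertible along d. If ad = da, then aw and wa are invertible along d, with (aw)^{∥d} = w^{∥d} a^{∥d} and (wa)^{∥d} = a^{∥d} w^{∥d}. -/
variable {R : Type*} [Ring R]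

theorem stmt9 (a w d ya yw : R)
    (ha : IsInvAlong d a ya) (hw : IsInvAlong d w yw)
    (h : a * d = d * a) :
    IsInvAlong d (a * w) (yw * ya) ∧ IsInvAlong d (w * a) (ya * yw) := by
  obtain ⟨h1, h2, h3, h4⟩ := ha
  obtain ⟨g1, g2, g3, g4⟩ := hw
  obtain ⟨s, hs⟩ := h3 ⟨1, (mul_one ya).symm⟩
  obtain ⟨t, ht⟩ := h4 ⟨1, (one_mul ya).symm⟩
  obtain ⟨p, hp⟩ := g3 ⟨1, (mul_one yw).symm⟩
  obtain ⟨q, hq⟩ := g4 ⟨1, (one_mul yw).symm⟩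
  -- ya commutes with d
  have hyad : ya * d = d * ya := by
    calc ya * d = ya * (d * a * ya) := by rw [h2]
      _ = ya * (a * d) * ya := by rw [show ya * (d * a * ya) = ya * (d * a) * ya from by
            noncomm_ring, ← h]
      _ = ya * a * d * ya := by noncomm_ring
      _ = d * ya := by rw [h1]
  -- d * (ya * a) = d
  have hde : d * (ya * a) = d := by
    calc d * (ya * a) = d * ya * a := by noncomm_ring
      _ = ya * d * a := by rw [← hyad]
      _ = ya * (d * a) := by noncomm_ring
      _ = ya * (a * d) := by rw [← h]
      _ = ya * a * d := by noncomm_ring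
      _ = d := h1
  -- a * ya = ya * a
  have haya : a * ya = ya * a := by
    have hef_f : ya * a * (a * ya) = a * ya := by
      calc ya * a * (a * ya) = ya * a * (a * (d * s)) := by rw [← hs]
        _ = ya * a * ((a * d) * s) := by noncomm_ring
        _ = ya * a * ((d * a) * s) := by rw [h]
        _ = (ya * a * d) * (a * s) := by noncomm_ring
        _ = d * (a * s) := by rw [h1]
        _ = (d * a) * s := by noncomm_ring
        _ = (a * d) * s := by rw [← h]
        _ = a * (d * s) := by noncomm_ring
        _ = a * ya := by rw [← hs]
    have hef_e : ya * a * (a * ya) = ya * a := by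
      calc ya * a * (a * ya) = t * d * a * (a * ya) := by rw [← ht]
        _ = t * (d * a) * (a * ya) := by noncomm_ring
        _ = t * (a * d) * (a * ya) := by rw [← h]
        _ = t * a * (d * a * ya) := by noncomm_ring
        _ = t * a * d := by rw [h2]
        _ = t * (a * d) := by noncomm_ring
        _ = t * (d * a) := by rw [h]
        _ = t * d * a := by noncomm_ring
        _ = ya * a := by rw [← ht]
    exact hef_f.symm.trans hef_e
  -- yw * (ya * a) = yw
  have hywe : yw * (ya * a) = yw := by
    calc yw * (ya * a) = q * (d * (ya * a)) := by rw [hq]; noncomm_ring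
      _ = q * d := by rw [hde]
      _ = yw := hq.symm
  -- (ya * a) * yw = yw
  have heyw : ya * a * yw = yw := by
    calc ya * a * yw = ya * a * (d * p) := by rw [← hp]
      _ = (ya * a * d) * p := by noncomm_ring
      _ = d * p := by rw [h1]
      _ = yw := hp.symm
  refine ⟨⟨?_, ?_, ?_, ?_⟩, ?_, ?_, ?_, ?_⟩
  · calc yw * ya * (a * w) * d = (yw * (ya * a)) * (w * d) := by noncomm_ring
      _ = yw * w * d := by rw [hywe]; noncomm_ring
      _ = d := g1
  · calc d * (a * w) * (yw * ya) = (d * a) * ((w * yw) * ya) := by noncomm_ring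
      _ = (a * d) * ((w * yw) * ya) := by rw [← h]
      _ = a * ((d * w * yw) * ya) := by noncomm_ring
      _ = a * (d * ya) := by rw [g2]
      _ = (a * d) * ya := by noncomm_ring
      _ = (d * a) * ya := by rw [h]
      _ = d := h2
  · rintro z ⟨r, rfl⟩
    exact ⟨p * (ya * r), by rw [hp]; noncomm_ring⟩
  · rintro z ⟨r, rfl⟩
    exact ⟨r * yw * t, by rw [ht]; noncomm_ring⟩
  · calc ya * yw * (w * a) * d = ya * ((yw * w) * (a * d)) := by noncomm_ring
      _ = ya * ((yw * w) * (d * a)) := by rw [h]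
      _ = (ya * (yw * w * d)) * a := by noncomm_ring
      _ = ya * d * a := by rw [g1]
      _ = d * ya * a := by rw [hyad]
      _ = d * (ya * a) := by noncomm_ring
      _ = d := hde
  · calc d * (w * a) * (ya * yw) = (d * w) * ((a * ya) * yw) := by noncomm_ring
      _ = (d * w) * (ya * a * yw) := by rw [haya]
      _ = d * w * yw := by rw [heyw]
      _ = d := g2
  · rintro z ⟨r, rfl⟩
    exact ⟨s * (yw * r), by rw [hs]; noncomm_ring⟩
  · rintro z ⟨r, rfl⟩
    exact ⟨r * ya * q, by rw [hq]; noncomm_ring⟩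
end

section
/- Let R be a ring and a, w, b, c, s, t ∈ R such that a^{(t,c)} and (a^{(t,c)} a w)^{(b,s)} exist. Then aw is (b,c)-invertible with (aw)^{(b,c)} = (a^{(t,c)} a w)^{(b,s)} a^{(t,c)} if and only if c = c a w (a^{(t,c)} a w)^{(b,s)} a^{(t,c)}. -/
variable {R : Type*} [Ring R]

theorem stmt10 (a w b c s t ya z : R)
    (ha : IsBCInv t c a ya) (hz : IsBCInv b s (ya * a * w) z) :
    IsBCInv b c (a * w) (z * ya) ↔ c = c * a * w * z * ya := by
  obtain ⟨⟨r1, hr1⟩, ⟨r2, hr2⟩, h3, h4⟩ := ha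
  obtain ⟨⟨p1, hp1⟩, ⟨p2, hp2⟩, q3, q4⟩ := hz
  simp only [IsBCInv, mul_assoc] at *
  constructor
  · rintro ⟨-, -, -, h⟩
    exact h.symm
  · intro h
    refine ⟨⟨p1, ?_⟩, ⟨r2, ?_⟩, q3, h.symm⟩
    · nth_rewrite 1 [hp1]; simp [mul_assoc]
    · nth_rewrite 1 [hr2]; simp [mul_assoc]
end

section
/- Let R be a ring and a, w, b, c, s, t ∈ R such that a^{(t,c)} and (a^{(t,c)} a w)^{(b,s)} exist. If Ra ⊆ Rs, then aw is (b,c)-invertible and (aw)^{(b,c)} = (a^{(t,c)} a w)^{(b,s)} a^{(t,c)}. -/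
variable {R : Type*} [Ring R]

theorem stmt11 (a w b c s t ya z : R)
    (ha : IsBCInv t c a ya) (hz : IsBCInv b s (ya * a * w) z)
    (h : lIdeal a ⊆ lIdeal s) :
    IsBCInv b c (a * w) (z * ya) := by
  obtain ⟨⟨r1, hr1⟩, ⟨r2, hr2⟩, h3, h4⟩ := ha
  obtain ⟨⟨r3, hr3⟩, ⟨r4, hr4⟩, h5, h6⟩ := hz
  obtain ⟨u, hu⟩ := h ⟨1, (one_mul a).symm⟩
  have hya : ya * a * ya = ya := by
    calc ya * a * ya = ya * a * (t * r1 * ya) := by nth_rewrite 2 [hr1]; rfl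
      _ = (ya * a * t) * (r1 * ya) := by noncomm_ring
      _ = t * (r1 * ya) := by rw [h3]
      _ = t * r1 * ya := by rw [mul_assoc]
      _ = ya := hr1.symm
  have e1 : ya * a = ya * u * s := by rw [hu, mul_assoc]
  have key : ya * a * w * z * ya = ya := by
    have : ya = ya * a * w * z * ya := by
      calc ya = ya * a * ya := hya.symm
        _ = ya * u * s * ya := by rw [e1]
        _ = ya * u * (s * (ya * a * w) * z) * ya := by rw [h6]
        _ = (ya * u * s) * ya * (a * w * z * ya) := by noncomm_ring
        _ = (ya * a) * ya * (a * w * z * ya) := by rw [← e1]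
        _ = ya * (a * w * z * ya) := by rw [hya]
        _ = ya * a * w * z * ya := by noncomm_ring
    exact this.symm
  refine ⟨⟨r3, ?_⟩, ⟨r2, ?_⟩, ?_, ?_⟩
  · conv_lhs => rw [hr3]
    noncomm_ring
  · conv_lhs => rw [hr2]
    noncomm_ring
  · have : z * ya * (a * w) * b = z * (ya * a * w) * b := by noncomm_ring
    rw [this, h5]
  · conv_lhs => rw [← h4]
    calc (c * a * ya) * (a * w) * (z * ya) = c * a * (ya * a * w * z * ya) := by
          noncomm_ring
      _ = c * a * ya := by rw [key]
      _ = c := h4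
end

section
/- Let R be a ring and a, w, b, c, s, t ∈ R such that (a w w^{(b,s)})^{(t,c)} and w^{(b,s)} exist. Then aw is (b,c)-invertible with (aw)^{(b,c)} = w^{(b,s)} (a w w^{(b,s)})^{(t,c)} if and only if b = w^{(b,s)} (a w w^{(b,s)})^{(t,c)} a w b. -/
variable {R : Type*} [Ring R]

theorem stmt12 (a w b c s t yw z : R)
    (hw : IsBCInv b s w yw) (hz : IsBCInv t c (a * w * yw) z) :
    IsBCInv b c (a * w) (yw * z) ↔ b = yw * z * a * w * b := by
  obtain ⟨⟨r1, h1⟩, ⟨r2, h2⟩, h3, h4⟩ := hw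
  obtain ⟨⟨r3, h5⟩, ⟨r4, h6⟩, h7, h8⟩ := hz
  constructor
  · rintro ⟨-, -, h, -⟩
    simp only [mul_assoc] at h ⊢
    exact h.symm
  · intro hb
    refine ⟨⟨r1, ?_⟩, ⟨r4, ?_⟩, ?_, ?_⟩
    · rw [← mul_assoc, ← h1]
    · conv_lhs => rw [h6]
      simp [mul_assoc]
    · simp only [mul_assoc] at hb ⊢
      exact hb.symm
    · simp only [mul_assoc] at h8 ⊢
      exact h8
end

section
/- Let R be a ring and a, w, b, c ∈ R such that a^{(b,c)} and (a^{(b,c)} a w)^{(b,c)} exist. If ac = ca, then aw is (b,c)-invertible and (aw)^{(b,c)} = (a^{(b,c)} a w)^{(b,c)} a^{(b,c)}. -/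
variable {R : Type*} [Ring R]

theorem stmt13 (a w b c ya z : R)
    (ha : IsBCInv b c a ya) (hz : IsBCInv b c (ya * a * w) z)
    (h : a * c = c * a) :
    IsBCInv b c (a * w) (z * ya) := by
  obtain ⟨⟨r1, h1⟩, ⟨s1, h2⟩, h3, h4⟩ := ha
  obtain ⟨⟨r2, h5⟩, ⟨s2, h6⟩, h7, h8⟩ := hz
  have key : c * a * w * z = c * a := by
    calc c * a * w * z = c * a * ya * a * w * z := by rw [h4]
      _ = a * c * ya * a * w * z := by rw [← h]
      _ = a * (c * (ya * a * w) * z) := by simp only [mul_assoc]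
      _ = a * c := by rw [h8]
      _ = c * a := h
  refine ⟨⟨r2, ?_⟩, ⟨s1, ?_⟩, ?_, ?_⟩
  · conv_lhs => rw [h5]
    simp only [mul_assoc]
  · conv_lhs => rw [h2]
    simp only [mul_assoc]
  · simp only [mul_assoc]
    simpa only [mul_assoc] using h7
  · calc c * (a * w) * (z * ya) = c * a * w * z * ya := by simp only [mul_assoc]
      _ = c * a * ya := by rw [key]
      _ = c := h4
end

section
/- Let R be a ring and a, b, c, w ∈ R such that a^{(b,c)} exists, wR = bR, and the right annihilator of w equals the right annihilator of c. Then aw and wa are group invertible, a^{(b,c)} = w (aw)^# = (wa)^# w, and w = a^{(b,c)} a w = w a a^{(b,c)}. -/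
variable {R : Type*} [Ring R]

private theorem ext2' {p q r : R} (h : p * q = r) :
    ∀ x : R, p * (q * x) = r * x := by
  intro x; rw [← mul_assoc, h]

private theorem ext3' {p q s r : R} (h : p * (q * s) = r) :
    ∀ x : R, p * (q * (s * x)) = r * x := by
  intro x; rw [← mul_assoc q s x, ← mul_assoc p (q * s) x, h]

private theorem ext4' {p q s t r : R} (h : p * (q * (s * t)) = r) :
    ∀ x : R, p * (q * (s * (t * x))) = r * x := by
  intro x; rw [← mul_assoc s t x, ← mul_assoc q (s * t) x, ← mul_assoc p, h]

theorem stmt15 (a b c w y : R) (hy : IsBCInv b c a y)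
    (h1 : rIdeal w = rIdeal b)
    (h2 : {r : R | w * r = 0} = {r : R | c * r = 0}) :
    ∃ g1 g2 : R, IsGroupInv (a * w) g1 ∧ IsGroupInv (w * a) g2 ∧
      y = w * g1 ∧ y = g2 * w ∧ w = y * a * w ∧ w = w * a * y := by
  obtain ⟨⟨r₁, hbr⟩, ⟨r₂, hrc⟩, hyab, hcay⟩ := hy
  obtain ⟨s, hws⟩ : w ∈ rIdeal b := by rw [← h1]; exact ⟨1, (mul_one w).symm⟩
  obtain ⟨t, hwt⟩ : b ∈ rIdeal w := by rw [h1]; exact ⟨1, (mul_one b).symm⟩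
  have hann : ∀ r : R, w * r = 0 ↔ c * r = 0 := fun r => Set.ext_iff.mp h2 r
  have hbr' : y = b * (r₁ * y) := by rw [← mul_assoc]; exact hbr
  have hrc' : y = y * (r₂ * c) := by rw [← mul_assoc]; exact hrc
  have hyab0 : y * (a * b) = b := by rw [← mul_assoc]; exact hyab
  have hcay0 : c * (a * y) = c := by rw [← mul_assoc]; exact hcay
  -- yaw = w
  have C0 : y * (a * w) = w := by rw [hws]; exact ext3' hyab0 s
  -- way = w  (via annihilators)
  have D0 : w * (a * y) = w := by
    have hc : c * (a * y - 1) = 0 := by rw [mul_sub, mul_one, hcay0, sub_self]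
    have hw : w * (a * y - 1) = 0 := (hann _).mpr hc
    rw [mul_sub, mul_one, sub_eq_zero] at hw
    exact hw
  -- yay = y
  have E0 : y * (a * y) = y := by
    have e1 := ext3' hyab0 (r₁ * y)
    rw [← hbr'] at e1
    exact e1
  obtain ⟨u, F0, H0⟩ : ∃ u : R, w * u = y ∧ u * (a * y) = u := by
    refine ⟨t * (r₁ * y), ?_, ?_⟩
    · rw [← mul_assoc, ← hwt]; exact hbr'.symm
    · simp only [mul_assoc]; rw [E0]
  -- w(uaw) = w
  have WUAW : w * (u * (a * w)) = w := by rw [ext2' F0, C0]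
  -- c(uaw) = c via annihilators
  have hcz2 : c * (u * (a * w)) = c := by
    have hw : w * (u * (a * w) - 1) = 0 := by
      rw [mul_sub, mul_one, WUAW, sub_self]
    have hc := (hann _).mp hw
    rw [mul_sub, mul_one, sub_eq_zero] at hc
    exact hc
  -- y(uaw) = y
  have G0 : y * (u * (a * w)) = y := by
    conv_lhs => rw [hrc']
    simp only [mul_assoc]
    rw [hcz2, ← hrc']
  refine ⟨a * (y * (u * (a * y))), y * (u * a), ⟨?_, ?_, ?_⟩, ⟨?_, ?_, ?_⟩, ?_, ?_, ?_, ?_⟩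
  · -- (aw) g1 (aw) = aw
    simp only [mul_assoc]
    rw [C0, G0, D0]
  · -- g1 (aw) g1 = g1
    simp only [mul_assoc]
    rw [ext3' D0, ext2' F0, E0, E0]
  · -- (aw) g1 = g1 (aw)
    simp only [mul_assoc]
    rw [ext3' D0, ext2' F0, E0, C0, G0]
  · -- (wa) g2 (wa) = wa
    simp only [mul_assoc]
    rw [ext4' G0, ext3' D0]
  · -- g2 (wa) g2 = g2
    simp only [mul_assoc]
    rw [ext3' D0, ext2' F0, ext3' H0]
  · -- (wa) g2 = g2 (wa)
    simp only [mul_assoc]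
    rw [ext3' D0, ext2' F0, ext4' G0]
  · -- y = w g1
    rw [ext3' D0, ext2' F0, E0]
  · -- y = g2 w
    simp only [mul_assoc]
    rw [G0]
  · -- w = yaw
    simp only [mul_assoc]
    rw [C0]
  · -- w = way
    simp only [mul_assoc]
    rw [D0]
end

section
/- Let R be a ring and a₁, a₂, b₁, b₂, c₁, c₂, b₃, c₃ ∈ R such that aᵢ is (bᵢ,cᵢ)-invertible for i = 1, 2. Suppose there exist a₁', a₂' ∈ R with aᵢ'R = bᵢR and Raᵢ' = Rcᵢ for i = 1, 2, and a₂'a₁'R = b₃R and Ra₂'a₁' = Rc₃. If a₁^{(b₁,c₁)} a₁ commutes with a₂ a₂' and a₂ a₂^{(b₂,c₂)} commutes with a₁' a₁, then a₁a₂ is (b₃,c₃)-invertible and (a₁a₂)^{(b₃,c₃)} = a₂^{(b₂,c₂)} a₁^{(b₁,c₁)}. -/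
variable {R : Type*} [Ring R]

theorem stmt16 (a1 a2 b1 b2 c1 c2 b3 c3 a1' a2' y1 y2 : R)
    (h1 : IsBCInv b1 c1 a1 y1) (h2 : IsBCInv b2 c2 a2 y2)
    (ha1r : rIdeal a1' = rIdeal b1) (ha1l : lIdeal a1' = lIdeal c1)
    (ha2r : rIdeal a2' = rIdeal b2) (ha2l : lIdeal a2' = lIdeal c2)
    (hb3 : rIdeal (a2' * a1') = rIdeal b3) (hc3 : lIdeal (a2' * a1') = lIdeal c3)
    (hcomm1 : y1 * a1 * (a2 * a2') = (a2 * a2') * (y1 * a1))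
    (hcomm2 : a2 * y2 * (a1' * a1) = (a1' * a1) * (a2 * y2)) :
    IsBCInv b3 c3 (a1 * a2) (y2 * y1) := by
  obtain ⟨⟨r1, hr1⟩, ⟨s1, hs1⟩, hb1, hc1⟩ := h1
  obtain ⟨⟨r2, hr2⟩, ⟨s2, hs2⟩, hb2, hc2⟩ := h2
  -- ideal witnesses
  have hmem1 : a1' ∈ rIdeal b1 := by rw [← ha1r]; exact ⟨1, (mul_one a1').symm⟩
  obtain ⟨t1, ht1⟩ := hmem1
  have hmem2 : b1 ∈ rIdeal a1' := by rw [ha1r]; exact ⟨1, (mul_one b1).symm⟩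
  obtain ⟨u1, hu1⟩ := hmem2
  have hmem3 : a1' ∈ lIdeal c1 := by rw [← ha1l]; exact ⟨1, (one_mul a1').symm⟩
  obtain ⟨v1, hv1⟩ := hmem3
  have hmem4 : c1 ∈ lIdeal a1' := by rw [ha1l]; exact ⟨1, (one_mul c1).symm⟩
  obtain ⟨w1, hw1⟩ := hmem4
  have hmem5 : a2' ∈ rIdeal b2 := by rw [← ha2r]; exact ⟨1, (mul_one a2').symm⟩
  obtain ⟨t2, ht2⟩ := hmem5
  have hmem6 : b2 ∈ rIdeal a2' := by rw [ha2r]; exact ⟨1, (mul_one b2).symm⟩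
  obtain ⟨u2, hu2⟩ := hmem6
  have hmem7 : a2' ∈ lIdeal c2 := by rw [← ha2l]; exact ⟨1, (one_mul a2').symm⟩
  obtain ⟨v2, hv2⟩ := hmem7
  have hmem8 : c2 ∈ lIdeal a2' := by rw [ha2l]; exact ⟨1, (one_mul c2).symm⟩
  obtain ⟨w2, hw2⟩ := hmem8
  have hmem9 : a2' * a1' ∈ rIdeal b3 := by rw [← hb3]; exact ⟨1, (mul_one _).symm⟩
  obtain ⟨β, hβ⟩ := hmem9
  have hmem10 : b3 ∈ rIdeal (a2' * a1') := by rw [hb3]; exact ⟨1, (mul_one b3).symm⟩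
  obtain ⟨μ, hμ⟩ := hmem10
  have hmem11 : a2' * a1' ∈ lIdeal c3 := by rw [← hc3]; exact ⟨1, (one_mul _).symm⟩
  obtain ⟨ν, hν⟩ := hmem11
  have hmem12 : c3 ∈ lIdeal (a2' * a1') := by rw [hc3]; exact ⟨1, (one_mul c3).symm⟩
  obtain ⟨κ, hκ⟩ := hmem12
  -- extended versions of the basic identities
  have hb1X : ∀ x : R, y1 * (a1 * (b1 * x)) = b1 * x := fun x => by
    rw [← mul_assoc, ← mul_assoc, hb1]
  have hc1X : ∀ x : R, c1 * (a1 * (y1 * x)) = c1 * x := fun x => by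
    rw [← mul_assoc, ← mul_assoc, hc1]
  have hb2X : ∀ x : R, y2 * (a2 * (b2 * x)) = b2 * x := fun x => by
    rw [← mul_assoc, ← mul_assoc, hb2]
  have hc2X : ∀ x : R, c2 * (a2 * (y2 * x)) = c2 * x := fun x => by
    rw [← mul_assoc, ← mul_assoc, hc2]
  have yadX : ∀ x : R, y1 * (a1 * (a1' * x)) = a1' * x := fun x => by
    rw [ht1, mul_assoc, hb1X]
  have yadE : y1 * (a1 * a1') = a1' := by rw [ht1, hb1X]
  have dayX : ∀ x : R, a1' * (a1 * (y1 * x)) = a1' * x := fun x => by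
    rw [hv1, mul_assoc, mul_assoc, hc1X]
  have dayE : a1' * (a1 * y1) = a1' := by rw [hv1, mul_assoc, ← mul_assoc c1, hc1]
  have zbeX : ∀ x : R, y2 * (a2 * (a2' * x)) = a2' * x := fun x => by
    rw [ht2, mul_assoc, hb2X]
  have ebzX : ∀ x : R, a2' * (a2 * (y2 * x)) = a2' * x := fun x => by
    rw [hv2, mul_assoc, mul_assoc, hc2X]
  -- y1 = a1' * X1 * a1' for opaque X1, similarly for y2
  have yEx : ∃ X : R, y1 = a1' * (X * a1') := by
    refine ⟨u1 * (r1 * (y1 * (s1 * w1))), ?_⟩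
    conv_lhs => rw [hr1]
    rw [hu1]
    conv_lhs => rw [hs1]
    rw [hw1]
    simp only [mul_assoc]
  obtain ⟨X1, yE⟩ := yEx
  have yX : ∀ x : R, y1 * x = a1' * (X1 * (a1' * x)) := fun x => by
    conv_lhs => rw [yE]
    simp only [mul_assoc]
  have zEx : ∃ X : R, y2 = a2' * (X * a2') := by
    refine ⟨u2 * (r2 * (y2 * (s2 * w2))), ?_⟩
    conv_lhs => rw [hr2]
    rw [hu2]
    conv_lhs => rw [hs2]
    rw [hw2]
    simp only [mul_assoc]
  obtain ⟨X2, zE⟩ := zEx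
  have zX : ∀ x : R, y2 * x = a2' * (X2 * (a2' * x)) := fun x => by
    conv_lhs => rw [zE]
    simp only [mul_assoc]
  -- extended commutation identities
  have h1X : ∀ x : R, y1 * (a1 * (a2 * (a2' * x))) = a2 * (a2' * (y1 * (a1 * x))) := fun x => by
    have h : y1 * a1 * (a2 * a2') * x = (a2 * a2') * (y1 * a1) * x := by rw [hcomm1]
    simpa only [mul_assoc] using h
  have h2X : ∀ x : R, a2 * (y2 * (a1' * (a1 * x))) = a1' * (a1 * (a2 * (y2 * x))) := fun x => by
    have h : a2 * y2 * (a1' * a1) * x = (a1' * a1) * (a2 * y2) * x := by rw [hcomm2]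
    simpa only [mul_assoc] using h
  -- key identities D3 : y u d = d  and  D4 : d u y = d  (u = a1*a2, d = a2'*a1')
  have D3 : y2 * y1 * (a1 * a2) * (a2' * a1') = a2' * a1' := by
    simp only [mul_assoc]
    rw [h1X a1', yadE, zbeX a1']
  have D4 : a2' * a1' * (a1 * a2) * (y2 * y1) = a2' * a1' := by
    simp only [mul_assoc]
    rw [← h2X y1, dayE, ebzX a1']
  -- membership: y2*y1 ∈ (a2'*a1')R
  have hP : ∃ s : R, y2 * y1 = (a2' * a1') * s := by
    refine ⟨X1 * (a1' * (a1 * (X2 * (a2' * (a1' * (a1 * (y1 * (X1 * a1')))))))), ?_⟩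
    conv_lhs =>
      rw [yE, zX (a1' * (X1 * a1')), ← dayX (X1 * a1'),
        ← zbeX (X2 * (a2' * (a1' * (a1 * (y1 * (X1 * a1')))))),
        ← zX (a1' * (a1 * (y1 * (X1 * a1')))),
        h2X (y1 * (X1 * a1')),
        ← yadX (a1 * (a2 * (y2 * (y1 * (X1 * a1'))))),
        ← h2X (y1 * (X1 * a1')),
        zX (a1' * (a1 * (y1 * (X1 * a1')))),
        h1X (X2 * (a2' * (a1' * (a1 * (y1 * (X1 * a1')))))),
        yX (a1 * (X2 * (a2' * (a1' * (a1 * (y1 * (X1 * a1'))))))),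
        zbeX (a1' * (X1 * (a1' * (a1 * (X2 * (a2' * (a1' * (a1 * (y1 * (X1 * a1'))))))))))]
    simp only [mul_assoc]
  obtain ⟨s, hs⟩ := hP
  -- membership: y2*y1 ∈ R(a2'*a1')
  have hQ : ∃ t : R, y2 * y1 = t * (a2' * a1') := by
    refine ⟨a2' * (X2 * (y2 * (a2 * (a2' * (a1' * (X1 * (a2 * (a2' * X2)))))))), ?_⟩
    conv_lhs =>
      rw [yE, zX (a1' * (X1 * a1')), ← yadX (X1 * a1'), ← yE,
        ← zbeX (y1 * (a1 * y1)),
        ← h1X y1,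
        ← ebzX y1,
        h1X (a2 * (y2 * y1)),
        yX (a1 * (a2 * (y2 * y1))),
        ← h2X y1,
        dayE,
        zX a1']
    simp only [mul_assoc]
  obtain ⟨t, ht⟩ := hQ
  -- y u y = y
  have yuy : y2 * y1 * (a1 * a2) * (y2 * y1) = y2 * y1 := by
    nth_rewrite 2 [hs]
    rw [← mul_assoc, D3, ← hs]
  refine ⟨?_, ?_, ?_, ?_⟩
  · -- ∃ r, y = b3 * r * y
    refine ⟨β * (s * (a1 * a2)), ?_⟩
    calc y2 * y1 = y2 * y1 * (a1 * a2) * (y2 * y1) := yuy.symm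
      _ = (a2' * a1') * s * (a1 * a2) * (y2 * y1) := by nth_rewrite 1 [hs]; rfl
      _ = b3 * (β * (s * (a1 * a2))) * (y2 * y1) := by rw [hβ]; simp only [mul_assoc]
  · -- ∃ r, y = y * r * c3
    refine ⟨(a1 * a2) * (t * ν), ?_⟩
    calc y2 * y1 = y2 * y1 * (a1 * a2) * (y2 * y1) := yuy.symm
      _ = y2 * y1 * (a1 * a2) * (t * (a2' * a1')) := by nth_rewrite 2 [ht]; rfl
      _ = y2 * y1 * ((a1 * a2) * (t * ν)) * c3 := by rw [hν]; simp only [mul_assoc]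
  · -- y * u * b3 = b3
    rw [hμ, ← mul_assoc, D3]
  · -- c3 * u * y = c3
    rw [hκ, mul_assoc κ, mul_assoc κ, D4]
end

section
/- Let R be a ring, aᵢ, dᵢ ∈ R (i = 1, 2) such that aᵢ is invertible along dᵢ. Suppose d₃ ∈ R satisfies d₂d₁R = d₃R and Rd₂d₁ = Rd₃. If a₁^{∥d₁} a₁ commutes with a₂ d₂ and a₂ a₂^{∥d₂} commutes with d₁ a₁, then a₁a₂ is invertible along d₃ and (a₁a₂)^{∥d₃} = a₂^{∥d₂} a₁^{∥d₁}. -/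
variable {R : Type*} [Ring R]

theorem stmt17 (a1 a2 d1 d2 d3 y1 y2 : R)
    (h1 : IsInvAlong d1 a1 y1) (h2 : IsInvAlong d2 a2 y2)
    (hr : rIdeal (d2 * d1) = rIdeal d3) (hl : lIdeal (d2 * d1) = lIdeal d3)
    (hcomm1 : y1 * a1 * (a2 * d2) = (a2 * d2) * (y1 * a1))
    (hcomm2 : a2 * y2 * (d1 * a1) = (d1 * a1) * (a2 * y2)) :
    IsInvAlong d3 (a1 * a2) (y2 * y1) := by
  obtain ⟨E1, E2, hy1r, hy1l⟩ := h1
  obtain ⟨E3, E4, hy2r, hy2l⟩ := h2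
  obtain ⟨s1, hs1⟩ : ∃ r : R, y1 = d1 * r := hy1r ⟨1, (mul_one y1).symm⟩
  obtain ⟨t1, ht1⟩ : ∃ r : R, y1 = r * d1 := hy1l ⟨1, (one_mul y1).symm⟩
  obtain ⟨s2, hs2⟩ : ∃ r : R, y2 = d2 * r := hy2r ⟨1, (mul_one y2).symm⟩
  obtain ⟨t2, ht2⟩ : ∃ r : R, y2 = r * d2 := hy2l ⟨1, (one_mul y2).symm⟩
  -- relations between d3 and d2*d1
  obtain ⟨m, hm⟩ : ∃ r : R, d3 = d2 * d1 * r := by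
    have : d3 ∈ rIdeal (d2 * d1) := by rw [hr]; exact ⟨1, (mul_one d3).symm⟩
    exact this
  obtain ⟨m', hm'⟩ : ∃ r : R, d3 = r * (d2 * d1) := by
    have : d3 ∈ lIdeal (d2 * d1) := by rw [hl]; exact ⟨1, (one_mul d3).symm⟩
    exact this
  obtain ⟨n, hn⟩ : ∃ r : R, d2 * d1 = d3 * r := by
    have : d2 * d1 ∈ rIdeal d3 := by rw [← hr]; exact ⟨1, (mul_one _).symm⟩
    exact this
  obtain ⟨n', hn'⟩ : ∃ r : R, d2 * d1 = r * d3 := by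
    have : d2 * d1 ∈ lIdeal d3 := by rw [← hl]; exact ⟨1, (one_mul _).symm⟩
    exact this
  -- key equation 1 : y2*y1*(a1*a2)*(d2*d1) = d2*d1
  have K1 : y2 * y1 * (a1 * a2) * (d2 * d1) = d2 * d1 := by
    have c1 : y2 * (y1 * (a1 * (a2 * (d2 * d1)))) = y2 * (a2 * (d2 * (y1 * (a1 * d1)))) := by
      simpa only [mul_assoc] using congrArg (fun z => y2 * z * d1) hcomm1
    have c2 : y2 * (a2 * (d2 * (y1 * (a1 * d1)))) = y2 * (a2 * (d2 * d1)) := by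
      simpa only [mul_assoc] using congrArg (fun z => y2 * a2 * d2 * z) E1
    have c3 : y2 * (a2 * (d2 * d1)) = d2 * d1 := by
      simpa only [mul_assoc] using congrArg (fun z => z * d1) E3
    simpa only [mul_assoc] using (c1.trans (c2.trans c3))
  -- key equation 2 : d2*d1*(a1*a2)*(y2*y1) = d2*d1
  have K2 : d2 * d1 * (a1 * a2) * (y2 * y1) = d2 * d1 := by
    have c1 : d2 * (d1 * (a1 * (a2 * (y2 * y1)))) = d2 * (a2 * (y2 * (d1 * (a1 * y1)))) := by
      simpa only [mul_assoc] using congrArg (fun z => d2 * z * y1) hcomm2.symm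
    have c2 : d2 * (a2 * (y2 * (d1 * (a1 * y1)))) = d2 * (d1 * (a1 * y1)) := by
      simpa only [mul_assoc] using congrArg (fun z => z * (d1 * (a1 * y1))) E4
    have c3 : d2 * (d1 * (a1 * y1)) = d2 * d1 := by
      simpa only [mul_assoc] using congrArg (fun z => d2 * z) E2
    simpa only [mul_assoc] using (c1.trans (c2.trans c3))
  -- right-ideal witness : y2*y1 = d2*d1*(s1*(a1*(s2*(d1*(a1*(y1*s1))))))
  have RW : y2 * y1 = d2 * d1 * (s1 * (a1 * (s2 * (d1 * (a1 * (y1 * s1)))))) := by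
    have w1 : y2 * y1 = y2 * (d1 * s1) := congrArg (fun z => y2 * z) hs1
    have w2 : y2 * (d1 * s1) = d2 * (s2 * (d1 * s1)) := by
      simpa only [mul_assoc] using congrArg (fun z => z * (d1 * s1)) hs2
    have w3 : d2 * (s2 * (d1 * s1)) = d2 * (s2 * (d1 * (a1 * (y1 * s1)))) := by
      simpa only [mul_assoc] using congrArg (fun z => d2 * s2 * z * s1) E2.symm
    have w4 : d2 * (s2 * (d1 * (a1 * (y1 * s1))))
        = y2 * (a2 * (d2 * (s2 * (d1 * (a1 * (y1 * s1)))))) := by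
      simpa only [mul_assoc] using
        congrArg (fun z => z * (s2 * (d1 * (a1 * (y1 * s1))))) E3.symm
    have w5 : y2 * (a2 * (d2 * (s2 * (d1 * (a1 * (y1 * s1))))))
        = y2 * (a2 * (y2 * (d1 * (a1 * (y1 * s1))))) := by
      simpa only [mul_assoc] using
        congrArg (fun z => y2 * a2 * z * (d1 * (a1 * (y1 * s1)))) hs2.symm
    have w6 : y2 * (a2 * (y2 * (d1 * (a1 * (y1 * s1)))))
        = y2 * (d1 * (a1 * (a2 * (y2 * (y1 * s1))))) := by
      simpa only [mul_assoc] using congrArg (fun z => y2 * z * (y1 * s1)) hcomm2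
    have w7 : y2 * (d1 * (a1 * (a2 * (y2 * (y1 * s1)))))
        = y2 * (y1 * (a1 * (d1 * (a1 * (a2 * (y2 * (y1 * s1))))))) := by
      simpa only [mul_assoc] using
        congrArg (fun z => y2 * z * (a1 * (a2 * (y2 * (y1 * s1))))) E1.symm
    have w8 : y2 * (y1 * (a1 * (d1 * (a1 * (a2 * (y2 * (y1 * s1)))))))
        = y2 * (y1 * (a1 * (a2 * (y2 * (d1 * (a1 * (y1 * s1))))))) := by
      simpa only [mul_assoc] using
        congrArg (fun z => y2 * (y1 * a1) * z * (y1 * s1)) hcomm2.symm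
    have w9 : y2 * (y1 * (a1 * (a2 * (y2 * (d1 * (a1 * (y1 * s1)))))))
        = y2 * (y1 * (a1 * (a2 * (d2 * (s2 * (d1 * (a1 * (y1 * s1)))))))) := by
      simpa only [mul_assoc] using
        congrArg (fun z => y2 * (y1 * a1) * a2 * z * (d1 * (a1 * (y1 * s1)))) hs2
    have w10 : y2 * (y1 * (a1 * (a2 * (d2 * (s2 * (d1 * (a1 * (y1 * s1))))))))
        = y2 * (a2 * (d2 * (y1 * (a1 * (s2 * (d1 * (a1 * (y1 * s1)))))))) := by
      simpa only [mul_assoc] using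
        congrArg (fun z => y2 * z * (s2 * (d1 * (a1 * (y1 * s1))))) hcomm1
    have w11 : y2 * (a2 * (d2 * (y1 * (a1 * (s2 * (d1 * (a1 * (y1 * s1))))))))
        = d2 * (y1 * (a1 * (s2 * (d1 * (a1 * (y1 * s1)))))) := by
      simpa only [mul_assoc] using
        congrArg (fun z => z * (y1 * (a1 * (s2 * (d1 * (a1 * (y1 * s1))))))) E3
    have w12 : d2 * (y1 * (a1 * (s2 * (d1 * (a1 * (y1 * s1))))))
        = d2 * (d1 * (s1 * (a1 * (s2 * (d1 * (a1 * (y1 * s1))))))) := by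
      simpa only [mul_assoc] using
        congrArg (fun z => d2 * z * (a1 * (s2 * (d1 * (a1 * (y1 * s1)))))) hs1
    simpa only [mul_assoc] using
      (((((((((((w1.trans w2).trans w3).trans w4).trans w5).trans w6).trans w7).trans
        w8).trans w9).trans w10).trans w11).trans w12)
  -- left-ideal witness : y2*y1 = (t2*(y2*(a2*(d2*(t1*(a2*t2))))))*(d2*d1)
  have LW : y2 * y1 = t2 * (y2 * (a2 * (d2 * (t1 * (a2 * t2))))) * (d2 * d1) := by
    have v1 : y2 * y1 = y2 * (d1 * s1) := congrArg (fun z => y2 * z) hs1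
    have v2 : y2 * (d1 * s1) = t2 * (d2 * (d1 * s1)) := by
      simpa only [mul_assoc] using congrArg (fun z => z * (d1 * s1)) ht2
    have v3 : t2 * (d2 * (d1 * s1)) = t2 * (d2 * (y1 * (a1 * (d1 * s1)))) := by
      simpa only [mul_assoc] using congrArg (fun z => t2 * d2 * z * s1) E1.symm
    have v4 : t2 * (d2 * (y1 * (a1 * (d1 * s1))))
        = t2 * (y2 * (a2 * (d2 * (y1 * (a1 * (d1 * s1)))))) := by
      simpa only [mul_assoc] using
        congrArg (fun z => t2 * z * (y1 * (a1 * (d1 * s1)))) E3.symm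
    have v5 : t2 * (y2 * (a2 * (d2 * (y1 * (a1 * (d1 * s1))))))
        = t2 * (y2 * (a2 * (d2 * (y1 * (a1 * y1))))) := by
      simpa only [mul_assoc] using
        congrArg (fun z => t2 * (y2 * (a2 * (d2 * (y1 * (a1 * z)))))) hs1.symm
    have v6 : t2 * (y2 * (a2 * (d2 * (y1 * (a1 * y1)))))
        = t2 * (y2 * (y1 * (a1 * (a2 * (d2 * y1))))) := by
      simpa only [mul_assoc] using congrArg (fun z => t2 * y2 * z * y1) hcomm1.symm
    have v7 : t2 * (y2 * (y1 * (a1 * (a2 * (d2 * y1)))))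
        = t2 * (y2 * (y1 * (a1 * (a2 * (d2 * (a2 * (y2 * y1))))))) := by
      simpa only [mul_assoc] using
        congrArg (fun z => t2 * (y2 * (y1 * (a1 * (a2 * (z * y1)))))) E4.symm
    have v8 : t2 * (y2 * (y1 * (a1 * (a2 * (d2 * (a2 * (y2 * y1)))))))
        = t2 * (y2 * (a2 * (d2 * (y1 * (a1 * (a2 * (y2 * y1))))))) := by
      simpa only [mul_assoc] using
        congrArg (fun z => t2 * y2 * z * (a2 * (y2 * y1))) hcomm1
    have v9 : t2 * (y2 * (a2 * (d2 * (y1 * (a1 * (a2 * (y2 * y1)))))))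
        = t2 * (y2 * (a2 * (d2 * (t1 * (d1 * (a1 * (a2 * (y2 * y1)))))))) := by
      simpa only [mul_assoc] using
        congrArg (fun z => t2 * (y2 * (a2 * (d2 * (z * (a1 * (a2 * (y2 * y1)))))))) ht1
    have v10 : t2 * (y2 * (a2 * (d2 * (t1 * (d1 * (a1 * (a2 * (y2 * y1))))))))
        = t2 * (y2 * (a2 * (d2 * (t1 * (a2 * (y2 * (d1 * (a1 * y1)))))))) := by
      simpa only [mul_assoc] using
        congrArg (fun z => t2 * (y2 * (a2 * (d2 * (t1 * (z * y1)))))) hcomm2.symm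
    have v11 : t2 * (y2 * (a2 * (d2 * (t1 * (a2 * (y2 * (d1 * (a1 * y1))))))))
        = t2 * (y2 * (a2 * (d2 * (t1 * (a2 * (y2 * d1)))))) := by
      simpa only [mul_assoc] using
        congrArg (fun z => t2 * (y2 * (a2 * (d2 * (t1 * (a2 * (y2 * z))))))) E2
    have v12 : t2 * (y2 * (a2 * (d2 * (t1 * (a2 * (y2 * d1))))))
        = t2 * (y2 * (a2 * (d2 * (t1 * (a2 * (t2 * (d2 * d1))))))) := by
      simpa only [mul_assoc] using
        congrArg (fun z => t2 * (y2 * (a2 * (d2 * (t1 * (a2 * (z * d1))))))) ht2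
    simpa only [mul_assoc] using
      (((((((((((v1.trans v2).trans v3).trans v4).trans v5).trans v6).trans v7).trans
        v8).trans v9).trans v10).trans v11).trans v12)
  refine ⟨?_, ?_, ?_, ?_⟩
  · calc y2 * y1 * (a1 * a2) * d3 = y2 * y1 * (a1 * a2) * (d2 * d1 * m) := by rw [hm]
      _ = y2 * y1 * (a1 * a2) * (d2 * d1) * m := (mul_assoc _ _ _).symm
      _ = d2 * d1 * m := by rw [K1]
      _ = d3 := hm.symm
  · calc d3 * (a1 * a2) * (y2 * y1) = m' * (d2 * d1) * (a1 * a2) * (y2 * y1) := by rw [hm']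
      _ = m' * (d2 * d1 * (a1 * a2) * (y2 * y1)) := by simp only [mul_assoc]
      _ = m' * (d2 * d1) := by rw [K2]
      _ = d3 := hm'.symm
  · rintro z ⟨r, rfl⟩
    refine ⟨n * (s1 * (a1 * (s2 * (d1 * (a1 * (y1 * s1))))) * r), ?_⟩
    rw [RW, hn]
    simp only [mul_assoc]
  · rintro z ⟨r, rfl⟩
    refine ⟨r * (t2 * (y2 * (a2 * (d2 * (t1 * (a2 * t2)))))) * n', ?_⟩
    rw [LW, hn']
    simp only [mul_assoc]
end

section
/- Let R be a ring with idempotents e, f, p, q, k, l and a, w ∈ R such that the (p,q)-outer inverse a^{(2)}_{p,q} and the (e,f)-outer inverse w^{(2)}_{e,f} exist. If a^{(2)}_{p,q} a commutes with w w^{(2)}_{e,f}, then the (k,l)-outer inverse (aw)^{(2)}_{k,l} exists and equals w^{(2)}_{e,f} a^{(2)}_{p,q} if and only if w^{(2)}_{e,f} p w = k and a (1 - f) a^{(2)}_{p,q} = 1 - l. -/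
variable {R : Type*} [Ring R]

theorem stmt18 (a w e f p q k l ya yw : R)
    (he : IsIdempotentElem e) (hf : IsIdempotentElem f)
    (hp : IsIdempotentElem p) (hq : IsIdempotentElem q)
    (hk : IsIdempotentElem k) (hl : IsIdempotentElem l)
    (ha : IsOuterInv p q a ya) (hw : IsOuterInv e f w yw)
    (hcomm : ya * a * (w * yw) = (w * yw) * (ya * a)) :
    IsOuterInv k l (a * w) (yw * ya) ↔
      (yw * p * w = k ∧ a * (1 - f) * ya = 1 - l) := by
  obtain ⟨ha1, ha2, ha3⟩ := ha
  obtain ⟨hw1, hw2, hw3⟩ := hw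
  constructor
  · rintro ⟨h1, h2, h3⟩
    constructor
    · calc yw * p * w = yw * (ya * a) * w := by rw [ha2]
        _ = yw * ya * (a * w) := by noncomm_ring
        _ = k := h2
    · calc a * (1 - f) * ya = a * (w * yw) * ya := by rw [hw3]
        _ = a * w * (yw * ya) := by noncomm_ring
        _ = 1 - l := h3
  · rintro ⟨h1, h2⟩
    refine ⟨?_, ?_, ?_⟩
    · calc yw * ya * (a * w) * (yw * ya) = yw * (ya * a * (w * yw)) * ya := by noncomm_ring
        _ = yw * (w * yw * (ya * a)) * ya := by rw [hcomm]
        _ = (yw * w * yw) * (ya * a * ya) := by noncomm_ring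
        _ = yw * ya := by rw [hw1, ha1]
    · calc yw * ya * (a * w) = yw * (ya * a) * w := by noncomm_ring
        _ = k := by rw [ha2, h1]
    · calc a * w * (yw * ya) = a * (w * yw) * ya := by noncomm_ring
        _ = 1 - l := by rw [hw3, h2]
end

section
/- Let R be a ring with idempotents p, q, s and a, b ∈ R such that a^{(2)}_{p,q} and b^{(2)}_{s,1-p} exist. Then ab has a (s,q)-outer inverse and (ab)^{(2)}_{s,q} = b^{(2)}_{s,1-p} a^{(2)}_{p,q}. -/
variable {R : Type*} [Ring R]

theorem stmt19 (a b p q s ya yb : R)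
    (hp : IsIdempotentElem p) (hq : IsIdempotentElem q) (hs : IsIdempotentElem s)
    (ha : IsOuterInv p q a ya) (hb : IsOuterInv s (1 - p) b yb) :
    IsOuterInv s q (a * b) (yb * ya) := by
  obtain ⟨h1, h2, h3⟩ := ha
  obtain ⟨h4, h5, h6⟩ := hb
  have h6' : b * yb = p := by rw [h6, sub_sub_cancel]
  have hybp : yb * p = yb := by rw [← h6', ← mul_assoc, h4]
  have hpya : p * ya = ya := by rw [← h2, mul_assoc, ← mul_assoc, h1]
  have hsyb : s * yb = yb := by rw [← h5, mul_assoc, ← mul_assoc, h4]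
  refine ⟨?_, ?_, ?_⟩
  · calc yb * ya * (a * b) * (yb * ya) = yb * (ya * a) * (b * yb) * ya := by
          simp only [mul_assoc]
      _ = yb * ya := by rw [h2, h6', hybp, hybp]
  · calc yb * ya * (a * b) = yb * (ya * a) * b := by simp only [mul_assoc]
      _ = s := by rw [h2, hybp, h5]
  · calc a * b * (yb * ya) = a * (b * yb) * ya := by simp only [mul_assoc]
      _ = 1 - q := by rw [h6', mul_assoc, hpya, h3]
end
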